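/- Let P be a polynomial with P'(z) = ∏_{i=1}^k (z - cᵢ) where c₁,…,c_k are distinct. Then the Schwarzian derivative of P satisfies S_P(z) = -(3/2) Σᵢ (Aᵢ(z-cᵢ)+1)/(z-cᵢ)² where Aᵢ = (2/3) Σ_{j≠i} 1/(cᵢ - cⱼ). -/

import Mathlib

/-!
Write `Q = P' = ∏ᵢ (X - cᵢ)`. Then `Q'/Q = Σᵢ 1/(z-cᵢ)` and `Q''/Q = Σ_{i≠j} 1/((z-cᵢ)(z-cⱼ))`,
so `S_P = Q''/Q - (3/2)(Q'/Q)² = -(3/2) Σᵢ 1/(z-cᵢ)² - (1/2) Σ_{i≠j} 1/((z-cᵢ)(z-cⱼ))`, and partial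
fractions turn the double sum into `2 Σᵢ (Σ_{j≠i} 1/(cᵢ-cⱼ)) / (z-cᵢ)`.
-/

open Finset

noncomputable def schwarzian (f : ℂ → ℂ) (z : ℂ) : ℂ :=
  deriv (deriv (deriv f)) z / deriv f z - (3 / 2) * (deriv (deriv f) z / deriv f z) ^ 2

open Polynomial

theorem Finset.sq_sum_eq_sum_sq_add_sum_erase {ι R : Type*} [CommSemiring R] [DecidableEq ι]
    (s : Finset ι) (a : ι → R) :
    (∑ i ∈ s, a i) ^ 2 = ∑ i ∈ s, a i ^ 2 + ∑ i ∈ s, ∑ j ∈ s.erase i, a i * a j := by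
  rw [sq, sum_mul_sum, ← sum_add_distrib]
  refine sum_congr rfl fun i hi => ?_
  rw [← add_sum_erase s _ hi, sq]

section ProdXSubC

variable {K ι : Type*} [Field K] [DecidableEq ι] {s : Finset ι} {c : ι → K} {z : K}

theorem prod_erase_sub_eq_mul_inv (hz : ∀ i ∈ s, z ≠ c i) {i : ι} (hi : i ∈ s) :
    ∏ j ∈ s.erase i, (z - c j) = (∏ j ∈ s, (z - c j)) * (z - c i)⁻¹ := by
  rw [← mul_prod_erase s (fun j => z - c j) hi, mul_comm (z - c i), mul_assoc,
    mul_inv_cancel₀ (sub_ne_zero.mpr (hz i hi)), mul_one]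

theorem eval_derivative_prod_X_sub_C (hz : ∀ i ∈ s, z ≠ c i) :
    (derivative (∏ i ∈ s, (X - C (c i)))).eval z =
      (∏ i ∈ s, (X - C (c i))).eval z * ∑ i ∈ s, (z - c i)⁻¹ := by
  simp only [derivative_prod_finset, derivative_X_sub_C, mul_one, eval_finsetSum, eval_prod,
    eval_sub, eval_X, eval_C, mul_sum]
  exact sum_congr rfl fun i hi => prod_erase_sub_eq_mul_inv hz hi

theorem eval_derivative_derivative_prod_X_sub_C (hz : ∀ i ∈ s, z ≠ c i) :
    (derivative (derivative (∏ i ∈ s, (X - C (c i))))).eval z =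
      (∏ i ∈ s, (X - C (c i))).eval z * ∑ i ∈ s, ∑ j ∈ s.erase i, (z - c i)⁻¹ * (z - c j)⁻¹ := by
  simp only [derivative_prod_finset (s := s), derivative_X_sub_C, mul_one, map_sum,
    eval_finsetSum, mul_sum]
  refine sum_congr rfl fun i hi => ?_
  rw [eval_derivative_prod_X_sub_C fun j hj => hz j (mem_of_mem_erase hj), mul_sum]
  refine sum_congr rfl fun j _ => ?_
  simp only [eval_prod, eval_sub, eval_X, eval_C, prod_erase_sub_eq_mul_inv hz hi]
  ring

-- Partial fractions `1/((z-cᵢ)(z-cⱼ)) = (1/(z-cᵢ) - 1/(z-cⱼ)) / (cᵢ-cⱼ)`, then swap `i` and `j`.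
theorem sum_sum_erase_inv_mul_inv (hc : Set.InjOn c s) (hz : ∀ i ∈ s, z ≠ c i) :
    ∑ i ∈ s, ∑ j ∈ s.erase i, (z - c i)⁻¹ * (z - c j)⁻¹ =
      2 * ∑ i ∈ s, (∑ j ∈ s.erase i, 1 / (c i - c j)) / (z - c i) := by
  have hterm : ∀ i ∈ s, ∀ j ∈ s.erase i, (z - c i)⁻¹ * (z - c j)⁻¹ =
      1 / (c i - c j) / (z - c i) + 1 / (c j - c i) / (z - c j) := by
    intro i hi j hj
    obtain ⟨hji, hj⟩ := mem_erase.mp hj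
    have hcij : c i - c j ≠ 0 := sub_ne_zero.mpr fun h => hji (hc hj hi h.symm)
    have hcji : c j - c i ≠ 0 := by rwa [← neg_sub, neg_ne_zero]
    have hzi := sub_ne_zero.mpr (hz i hi)
    have hzj := sub_ne_zero.mpr (hz j hj)
    field_simp
    ring
  have hswap : ∑ i ∈ s, ∑ j ∈ s.erase i, 1 / (c j - c i) / (z - c j) =
      ∑ i ∈ s, ∑ j ∈ s.erase i, 1 / (c i - c j) / (z - c i) :=
    sum_comm' (by intro x y; simp only [mem_erase]; tauto)
  rw [sum_congr rfl fun i hi => sum_congr rfl (hterm i hi)]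
  simp only [sum_add_distrib, hswap, sum_div]
  ring

end ProdXSubC

theorem schwarzian_eval (P : ℂ[X]) (z : ℂ) :
    schwarzian (fun w => P.eval w) z =
      (derivative^[3] P).eval z / (derivative P).eval z
        - (3 / 2) * ((derivative^[2] P).eval z / (derivative P).eval z) ^ 2 := by
  have hderiv : ∀ Q : ℂ[X], deriv (fun w => Q.eval w) = fun w => (derivative Q).eval w :=
    fun Q => funext fun w => Polynomial.deriv Q
  simp only [schwarzian, hderiv, Function.iterate_succ, Function.iterate_zero,
    Function.comp_apply, Function.id_def]

/-- If `P` is a polynomial with `P'(z) = ∏ᵢ (z - cᵢ)`, the `cᵢ` distinct, then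
`S_P(z) = -(3/2) Σᵢ (Aᵢ(z-cᵢ)+1)/(z-cᵢ)²` with `Aᵢ = (2/3) Σ_{j≠i} 1/(cᵢ-cⱼ)`. -/
theorem schwarzian_of_polynomial (k : ℕ) (c : Fin k → ℂ) (hc : Function.Injective c)
    (P : Polynomial ℂ) (hP : P.derivative = ∏ i, (Polynomial.X - Polynomial.C (c i)))
    (z : ℂ) (hz : ∀ i, z ≠ c i) :
    schwarzian (fun w => P.eval w) z =
      -(3 / 2) * ∑ i, (((2 / 3) * ∑ j ∈ univ.erase i, 1 / (c i - c j)) * (z - c i) + 1)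
        / (z - c i) ^ 2 := by
  have hz' : ∀ i ∈ univ, z ≠ c i := fun i _ => hz i
  have hQ : (∏ i, (X - C (c i))).eval z ≠ 0 := by
    simpa [eval_prod, prod_eq_zero_iff, sub_eq_zero] using hz
  have hrhs : ∀ i, (((2 / 3) * ∑ j ∈ univ.erase i, 1 / (c i - c j)) * (z - c i) + 1)
      / (z - c i) ^ 2 = 2 / 3 * ((∑ j ∈ univ.erase i, 1 / (c i - c j)) / (z - c i))
        + (z - c i)⁻¹ ^ 2 := by
    intro i
    have := sub_ne_zero.mpr (hz i)
    field_simp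
  rw [schwarzian_eval, Function.iterate_succ_apply' _ 2, Function.iterate_succ_apply' _ 1,
    Function.iterate_one, hP, eval_derivative_derivative_prod_X_sub_C hz',
    eval_derivative_prod_X_sub_C hz', mul_div_cancel_left₀ _ hQ, mul_div_cancel_left₀ _ hQ,
    sq_sum_eq_sum_sq_add_sum_erase, sum_sum_erase_inv_mul_inv hc.injOn hz',
    sum_congr rfl fun i _ => hrhs i, sum_add_distrib, ← mul_sum]
  ring
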